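/- Let p and q be distinct squares of the n×n board that do not lie on a common row, column, or diagonal. Then the number of squares of the board attacked simultaneously by a queen on p and a queen on q is at most 12. -/

import Mathlib

/-- The n×n board: squares (x,y) ∈ ℤ×ℤ with 1 ≤ x ≤ n and 1 ≤ y ≤ n. -/
noncomputable def board (n : ℕ) : Finset (ℤ × ℤ) := Finset.Icc 1 (n : ℤ) ×ˢ Finset.Icc 1 (n : ℤ)

/-- A line of the board: a row (fixed y), a column (fixed x), a positive
diagonal (fixed x − y), or a negative diagonal (fixed x + y). -/
inductive Line : Type where
  | row : ℤ → Line
  | col : ℤ → Line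
  | posDiag : ℤ → Line
  | negDiag : ℤ → Line
deriving DecidableEq

/-- The defining condition for a point to be on a given line. -/
def Line.pred : Line → ℤ × ℤ → Prop
  | .row b, p => p.2 = b
  | .col a, p => p.1 = a
  | .posDiag d, p => p.1 - p.2 = d
  | .negDiag s, p => p.1 + p.2 = s

instance (L : Line) (p : ℤ × ℤ) : Decidable (L.pred p) :=
  match L with
  | .row b => inferInstanceAs (Decidable (p.2 = b))
  | .col a => inferInstanceAs (Decidable (p.1 = a))
  | .posDiag d => inferInstanceAs (Decidable (p.1 - p.2 = d))
  | .negDiag s => inferInstanceAs (Decidable (p.1 + p.2 = s))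

/-- The set of squares of the n×n board lying on a line. -/
noncomputable def Line.squares (n : ℕ) (L : Line) : Finset (ℤ × ℤ) := (board n).filter L.pred

/-- The length of a line: its number of board squares. -/
noncomputable def Line.length (n : ℕ) (L : Line) : ℕ := (L.squares n).card

/-- Whether a line is a diagonal (of either orientation). -/
def Line.isDiag : Line → Prop
  | .posDiag _ => True
  | .negDiag _ => True
  | _ => False

/-- The set of board squares attacked by a placement S of queens: squares q on
the board such that some queen p ∈ S with p ≠ q shares a row, column, or
diagonal with q. -/
noncomputable def attacked (n : ℕ) (S : Finset (ℤ × ℤ)) : Finset (ℤ × ℤ) :=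
  S.biUnion fun p => (board n).filter fun q =>
    q ≠ p ∧ (p.1 = q.1 ∨ p.2 = q.2 ∨ p.1 - p.2 = q.1 - q.2 ∨ p.1 + p.2 = q.1 + q.2)

/-- G(m) = ⌊m²/12⌋ + 1 if m ≡ 3, 6, 9 (mod 12) or m = 10; ⌊m²/12⌋ otherwise. -/
def G (m : ℕ) : ℕ :=
  if m % 12 = 3 ∨ m % 12 = 6 ∨ m % 12 = 9 ∨ m = 10 then m ^ 2 / 12 + 1 else m ^ 2 / 12

inductive Direction : Type where
  | horizontal
  | vertical
  | ascending
  | descending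
deriving DecidableEq

instance : Fintype Direction :=
  ⟨{.horizontal, .vertical, .ascending, .descending}, fun d => by cases d <;> decide⟩

namespace Line

def through : Direction → ℤ × ℤ → Line
  | .horizontal, c => .row c.2
  | .vertical, c => .col c.1
  | .ascending, c => .posDiag (c.1 - c.2)
  | .descending, c => .negDiag (c.1 + c.2)

theorem pred_through_self (d : Direction) (c : ℤ × ℤ) : (through d c).pred c := by
  cases d <;> rfl

theorem through_eq_of_pred {d : Direction} {c r : ℤ × ℤ} (h : (through d c).pred r) :
    through d r = through d c := by
  cases d <;> simp_all [through, pred]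

theorem eq_of_pred_through_of_ne {d e : Direction} (hde : d ≠ e) {a b r s : ℤ × ℤ}
    (hra : (through d a).pred r) (hrb : (through e b).pred r)
    (hsa : (through d a).pred s) (hsb : (through e b).pred s) : r = s := by
  cases d <;> cases e <;> simp_all [through, pred] <;> ext <;> omega

theorem card_squares_through_inter_le_one (n : ℕ) {d e : Direction} (hde : d ≠ e)
    (a b : ℤ × ℤ) : ((through d a).squares n ∩ (through e b).squares n).card ≤ 1 := by
  refine Finset.card_le_one.2 fun r hr s hs => ?_
  simp only [squares, Finset.mem_inter, Finset.mem_filter] at hr hs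
  exact eq_of_pred_through_of_ne hde hr.1.2 hr.2.2 hs.1.2 hs.2.2

end Line

theorem mem_attacked_singleton_iff {n : ℕ} {p r : ℤ × ℤ} :
    r ∈ attacked n {p} ↔ r ∈ board n ∧ r ≠ p ∧ ∃ d, (Line.through d p).pred r := by
  simp only [attacked, Finset.singleton_biUnion, Finset.mem_filter]
  refine and_congr_right fun _ => and_congr_right fun _ => ?_
  constructor
  · rintro (h | h | h | h)
    exacts [⟨.vertical, h.symm⟩, ⟨.horizontal, h.symm⟩, ⟨.ascending, h.symm⟩,
      ⟨.descending, h.symm⟩]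
  · rintro ⟨d, h⟩
    cases d
    exacts [Or.inr (Or.inl h.symm), Or.inl h.symm, Or.inr (Or.inr (Or.inl h.symm)),
      Or.inr (Or.inr (Or.inr h.symm))]

/-- A square attacked by both queens lies on a line through `p` and a line through `q`; these
cannot be parallel, since parallel lines sharing a square coincide, and two non-parallel lines
share at most one square. So each of the `4 * 3` ordered pairs of distinct directions
contributes at most one square. -/
theorem card_inter_attacked_le_twelve (n : ℕ) {p q : ℤ × ℤ}
    (hpq : ∀ d, ¬ (Line.through d p).pred q) :
    (attacked n {p} ∩ attacked n {q}).card ≤ 12 := by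
  let meet : Direction × Direction → Finset (ℤ × ℤ) := fun de =>
    (Line.through de.1 p).squares n ∩ (Line.through de.2 q).squares n
  have hsub : attacked n {p} ∩ attacked n {q} ⊆ Finset.univ.offDiag.biUnion meet := by
    intro r hr
    obtain ⟨⟨hboard, -, d, hd⟩, -, -, e, he⟩ :=
      And.imp mem_attacked_singleton_iff.1 mem_attacked_singleton_iff.1 (Finset.mem_inter.1 hr)
    have hde : d ≠ e := by
      rintro rfl
      apply hpq d
      rw [← Line.through_eq_of_pred hd, Line.through_eq_of_pred he]
      exact Line.pred_through_self d q
    simp only [Finset.mem_biUnion, Finset.mem_offDiag, Finset.mem_univ, true_and]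
    exact ⟨(d, e), hde, by simp [meet, Line.squares, hboard, hd, he]⟩
  calc (attacked n {p} ∩ attacked n {q}).card
      ≤ (Finset.univ.offDiag.biUnion meet).card := Finset.card_le_card hsub
    _ ≤ ∑ de ∈ Finset.univ.offDiag, (meet de).card := Finset.card_biUnion_le
    _ ≤ ∑ _de ∈ (Finset.univ : Finset Direction).offDiag, 1 :=
      Finset.sum_le_sum fun de hde =>
        Line.card_squares_through_inter_le_one n (Finset.mem_offDiag.1 hde).2.2 p q
    _ = 12 := rfl

theorem common_attacked_squares_le_twelve_general (n : ℕ) (p q : ℤ × ℤ)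
    (hrow : p.2 ≠ q.2) (hcol : p.1 ≠ q.1)
    (hpos : p.1 - p.2 ≠ q.1 - q.2) (hneg : p.1 + p.2 ≠ q.1 + q.2) :
    (attacked n {p} ∩ attacked n {q}).card ≤ 12 :=
  card_inter_attacked_le_twelve n fun d hd => by
    cases d <;> simp only [Line.through, Line.pred] at hd <;> omega

/-- Two queens on distinct squares of the n×n board sharing no
row, column, or diagonal attack at most 12 squares in common. -/
theorem common_attacked_squares_le_twelve (n : ℕ) (p q : ℤ × ℤ)
    (hp : p ∈ board n) (hq : q ∈ board n) (hne : p ≠ q)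
    (hrow : p.2 ≠ q.2) (hcol : p.1 ≠ q.1)
    (hpos : p.1 - p.2 ≠ q.1 - q.2) (hneg : p.1 + p.2 ≠ q.1 + q.2) :
    (attacked n {p} ∩ attacked n {q}).card ≤ 12 :=
  common_attacked_squares_le_twelve_general n p q hrow hcol hpos hneg
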